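/- Assume the CRK setup. Let Δt ∈ ℝ, let g : [0,1] → ℝ^d be continuous, let z⁰ ∈ ℝ^d, define z(τ) = z⁰ + Δt ∫₀¹ A_{τ,σ} g(σ) dσ, and let S : ℝ^d → ℝ be continuously differentiable. Then S(z(1)) − S(z(0)) = Δt Σ_{i=1}^s b_i ⟨g⟩_iᵀ ⟨∇S ∘ z⟩_i, where ⟨∇S ∘ z⟩_i = (1/b_i) ∫₀¹ l_i(τ) ∇S(z(τ)) dτ. -/

import Mathlib

open scoped Matrix

noncomputable def dotCLM {d : ℕ} (g : Fin d → ℝ) : (Fin d → ℝ) →L[ℝ] ℝ :=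
  ∑ i : Fin d, g i • (ContinuousLinearMap.proj i : (Fin d → ℝ) →L[ℝ] ℝ)

noncomputable def lag {s : ℕ} (c : Fin s → ℝ) (i : Fin s) (τ : ℝ) : ℝ :=
  (Lagrange.basis (Finset.univ : Finset (Fin s)) c i).eval τ

noncomputable def bw {s : ℕ} (c : Fin s → ℝ) (i : Fin s) : ℝ :=
  ∫ τ in (0:ℝ)..1, lag c i τ

noncomputable def Acrk {s : ℕ} (c : Fin s → ℝ) (τ σ : ℝ) : ℝ :=
  ∑ i : Fin s, (1 / bw c i) * (∫ α in (0:ℝ)..τ, lag c i α) * lag c i σ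

noncomputable def wavg {s : ℕ} (c : Fin s → ℝ) (i : Fin s) {G : Type*}
    [NormedAddCommGroup G] [NormedSpace ℝ G] (f : ℝ → G) : G :=
  (1 / bw c i) • ∫ τ in (0:ℝ)..1, lag c i τ • f τ

/-!
With `Lᵢ(τ) = ∫₀^τ lᵢ`, the definition of `A` makes the stage curve
`z(τ) = z⁰ + Δt ∑ᵢ Lᵢ(τ) ⟨g⟩ᵢ`, so `z'(τ) = Δt ∑ᵢ lᵢ(τ) ⟨g⟩ᵢ`. The fundamental theorem of calculus
along `z` gives `S(z(1)) - S(z(0)) = ∫₀¹ ∇S(z(τ)) ⬝ z'(τ) dτ`, and in each term of the sum the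
weighted integral `∫₀¹ lᵢ(τ) ∇S(z(τ)) dτ` is `bᵢ ⟨∇S ∘ z⟩ᵢ`.
-/

open MeasureTheory Set

lemma dotCLM_apply {d : ℕ} (g v : Fin d → ℝ) : dotCLM g v = g ⬝ᵥ v := by
  simp [dotCLM, dotProduct]

section Collocation

variable {s : ℕ} (c : Fin s → ℝ)
variable {E : Type*} [NormedAddCommGroup E] [NormedSpace ℝ E]

lemma continuous_lag (i : Fin s) : Continuous (lag c i) :=
  (Lagrange.basis Finset.univ c i).continuous

lemma integral_lag_smul_eq_bw_smul_wavg {i : Fin s} (hb : bw c i ≠ 0) (f : ℝ → E) :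
    ∫ τ in (0:ℝ)..1, lag c i τ • f τ = bw c i • wavg c i f := by
  rw [wavg, smul_smul, mul_one_div_cancel hb, one_smul]

lemma integral_Acrk_smul {g : ℝ → E} (hg : IntervalIntegrable g volume 0 1) (τ : ℝ) :
    ∫ σ in (0:ℝ)..1, Acrk c τ σ • g σ
      = ∑ i, (∫ α in (0:ℝ)..τ, lag c i α) • wavg c i g := by
  have hlg : ∀ i, IntervalIntegrable (fun σ => lag c i σ • g σ) volume 0 1 := fun i =>
    hg.continuousOn_smul (continuous_lag c i).continuousOn
  simp_rw [Acrk, Finset.sum_smul, mul_smul]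
  refine (intervalIntegral.integral_finsetSum fun i _ => ?_).trans
    (Finset.sum_congr rfl fun i _ => ?_)
  · exact ((hlg i).smul (_ : ℝ)).smul (_ : ℝ)
  · rw [intervalIntegral.integral_smul, intervalIntegral.integral_smul, wavg, smul_comm]

lemma hasDerivAt_add_sum_integral_lag_smul (z0 : E) (v : Fin s → E) (τ : ℝ) :
    HasDerivAt (fun t => z0 + ∑ i, (∫ α in (0:ℝ)..t, lag c i α) • v i)
      (∑ i, lag c i τ • v i) τ :=
  (HasDerivAt.fun_sum fun i _ =>
    ((continuous_lag c i).integral_hasStrictDerivAt 0 τ).hasDerivAt.smul_const (v i)).const_add z0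

lemma integral_lag_mul_dotProduct {d : ℕ} {i : Fin s} (hb : bw c i ≠ 0) {G : ℝ → Fin d → ℝ}
    (hG : IntervalIntegrable G volume 0 1) (v : Fin d → ℝ) :
    ∫ τ in (0:ℝ)..1, lag c i τ * (v ⬝ᵥ G τ) = bw c i * (v ⬝ᵥ wavg c i G) := by
  have hlG : IntervalIntegrable (fun τ => lag c i τ • G τ) volume 0 1 :=
    hG.continuousOn_smul (continuous_lag c i).continuousOn
  calc ∫ τ in (0:ℝ)..1, lag c i τ * (v ⬝ᵥ G τ)
      = ∫ τ in (0:ℝ)..1, dotCLM v (lag c i τ • G τ) := by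
        simp only [map_smul, dotCLM_apply, smul_eq_mul]
    _ = bw c i * (v ⬝ᵥ wavg c i G) := by
        rw [ContinuousLinearMap.intervalIntegral_comp_comm _ hlG,
          integral_lag_smul_eq_bw_smul_wavg c hb, map_smul, dotCLM_apply, smul_eq_mul]

end Collocation

lemma sub_eq_integral_dotProduct_of_hasDerivAt {d : ℕ} {S : (Fin d → ℝ) → ℝ}
    {gradS : (Fin d → ℝ) → (Fin d → ℝ)} (hS : ∀ w, HasFDerivAt S (dotCLM (gradS w)) w)
    {z z' : ℝ → Fin d → ℝ} {a b : ℝ} (hz : ∀ τ ∈ uIcc a b, HasDerivAt z (z' τ) τ)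
    (hint : IntervalIntegrable (fun τ => gradS (z τ) ⬝ᵥ z' τ) volume a b) :
    S (z b) - S (z a) = ∫ τ in a..b, gradS (z τ) ⬝ᵥ z' τ := by
  refine (intervalIntegral.integral_eq_sub_of_hasDerivAt (f := fun t => S (z t))
    (fun τ hτ => ?_) hint).symm
  simpa only [dotCLM_apply, Function.comp_def] using (hS (z τ)).comp_hasDerivAt τ (hz τ hτ)

theorem sub_eq_sum_bw_mul_dotProduct_wavg {s d : ℕ} {c : Fin s → ℝ} (hb : ∀ i, bw c i ≠ 0)
    {S : (Fin d → ℝ) → ℝ} {gradS : (Fin d → ℝ) → (Fin d → ℝ)}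
    (hS : ∀ w, HasFDerivAt S (dotCLM (gradS w)) w) (hSc : Continuous gradS)
    (z0 : Fin d → ℝ) (v : Fin s → Fin d → ℝ) {z : ℝ → Fin d → ℝ}
    (hz : ∀ τ, z τ = z0 + ∑ i, (∫ α in (0:ℝ)..τ, lag c i α) • v i) :
    S (z 1) - S (z 0) = ∑ i, bw c i * (v i ⬝ᵥ wavg c i fun τ => gradS (z τ)) := by
  have hz' : ∀ τ, HasDerivAt z (∑ i, lag c i τ • v i) τ := by
    rw [funext hz]
    exact hasDerivAt_add_sum_integral_lag_smul c z0 v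
  have hGc : Continuous fun τ => gradS (z τ) :=
    hSc.comp (continuous_iff_continuousAt.2 fun τ => (hz' τ).continuousAt)
  have hint : ∀ i, IntervalIntegrable (fun τ => lag c i τ * (v i ⬝ᵥ gradS (z τ))) volume 0 1 :=
    fun i => ((continuous_lag c i).mul (continuous_const.dotProduct hGc)).intervalIntegrable 0 1
  have hdot : IntervalIntegrable (fun τ => gradS (z τ) ⬝ᵥ ∑ i, lag c i τ • v i) volume 0 1 :=
    (hGc.dotProduct (continuous_finsetSum _ fun i _ =>
      (continuous_lag c i).smul continuous_const)).intervalIntegrable 0 1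
  rw [sub_eq_integral_dotProduct_of_hasDerivAt hS (fun τ _ => hz' τ) hdot]
  simp_rw [dotProduct_sum, dotProduct_smul, smul_eq_mul, dotProduct_comm _ (v _)]
  rw [intervalIntegral.integral_finsetSum fun i _ => hint i]
  exact Finset.sum_congr rfl fun i _ =>
    integral_lag_mul_dotProduct c (hb i) (hGc.intervalIntegrable 0 1) (v i)

theorem stmt4_general {s d : ℕ} (c : Fin s → ℝ)
    (hb : ∀ i, bw c i ≠ 0)
    (Δt : ℝ) (g : ℝ → (Fin d → ℝ)) (hg : ContinuousOn g (Set.Icc 0 1))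
    (z0 : Fin d → ℝ) (z : ℝ → (Fin d → ℝ))
    (hz : ∀ τ, z τ = z0 + Δt • ∫ σ in (0:ℝ)..1, Acrk c τ σ • g σ)
    (S : (Fin d → ℝ) → ℝ) (gradS : (Fin d → ℝ) → (Fin d → ℝ))
    (hS : ∀ w, HasFDerivAt S (dotCLM (gradS w)) w)
    (hSc : Continuous gradS) :
    S (z 1) - S (z 0)
      = Δt * ∑ i, bw c i * dotProduct (wavg c i g) (wavg c i fun τ => gradS (z τ)) := by
  have hgi : IntervalIntegrable g volume 0 1 :=
    ContinuousOn.intervalIntegrable (by rwa [uIcc_of_le zero_le_one])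
  have hz' : ∀ τ, z τ = z0 + ∑ i, (∫ α in (0:ℝ)..τ, lag c i α) • (Δt • wavg c i g) := by
    intro τ
    rw [hz, integral_Acrk_smul c hgi, Finset.smul_sum]
    simp_rw [smul_comm Δt]
  rw [sub_eq_sum_bw_mul_dotProduct_wavg hb hS hSc z0 _ hz', Finset.mul_sum]
  simp_rw [smul_dotProduct, smul_eq_mul, mul_left_comm Δt]

theorem stmt4 {s d : ℕ} (hs : 1 ≤ s) (c : Fin s → ℝ) (hc : Function.Injective c)
    (hb : ∀ i, bw c i ≠ 0)
    (Δt : ℝ) (g : ℝ → (Fin d → ℝ)) (hg : ContinuousOn g (Set.Icc 0 1))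
    (z0 : Fin d → ℝ) (z : ℝ → (Fin d → ℝ))
    (hz : ∀ τ, z τ = z0 + Δt • ∫ σ in (0:ℝ)..1, Acrk c τ σ • g σ)
    (S : (Fin d → ℝ) → ℝ) (gradS : (Fin d → ℝ) → (Fin d → ℝ))
    (hS : ∀ w, HasFDerivAt S (dotCLM (gradS w)) w)
    (hSc : Continuous gradS) :
    S (z 1) - S (z 0)
      = Δt * ∑ i, bw c i * dotProduct (wavg c i g) (wavg c i fun τ => gradS (z τ)) :=
  stmt4_general c hb Δt g hg z0 z hz S gradS hS hSc
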